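/- For all β = (β1, β2, β3) ∈ ℝ³ and β' = (β'1, β'2, β'3) ∈ ℝ³ with β1 + β2 + β3 = 1 and β'1 + β'2 + β'3 = 1, the matrix identity R2(β)·R3(β') = R2(β')·R3(β) holds. -/

import Mathlib

/-- The 12×10 recursion matrix `R1` (with `γj = 2 βj − c`; the paper's `R1` is `c = 1`,
the derivative matrix `U1` is `c = 0`). -/
noncomputable def R1g (b1 b2 b3 c : ℝ) : Matrix (Fin 12) (Fin 10) ℝ :=
  !![2*b1 - c, 0, 0, 0, 0, 2*(b3 - b2), 4*b2, 0, 0, 0;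
     2*b1 - c, 0, 0, 2*(b2 - b3), 0, 0, 4*b3, 0, 0, 0;
     0, 2*b2 - c, 0, 2*(b1 - b3), 0, 0, 0, 4*b3, 0, 0;
     0, 2*b2 - c, 0, 0, 2*(b3 - b1), 0, 0, 4*b1, 0, 0;
     0, 0, 2*b3 - c, 0, 2*(b2 - b1), 0, 0, 0, 4*b1, 0;
     0, 0, 2*b3 - c, 0, 0, 2*(b1 - b2), 0, 0, 4*b2, 0;
     0, 0, 0, 0, 0, 2*(b3 - b2), 4*(b1 - b3), 0, 0, -3*(2*b1 - c);
     0, 0, 0, 2*(b2 - b3), 0, 0, 4*(b1 - b2), 0, 0, -3*(2*b1 - c);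
     0, 0, 0, 2*(b1 - b3), 0, 0, 0, 4*(b2 - b1), 0, -3*(2*b2 - c);
     0, 0, 0, 0, 2*(b3 - b1), 0, 0, 4*(b2 - b3), 0, -3*(2*b2 - c);
     0, 0, 0, 0, 2*(b2 - b1), 0, 0, 0, 4*(b3 - b2), -3*(2*b3 - c);
     0, 0, 0, 0, 0, 2*(b1 - b2), 0, 0, 4*(b3 - b1), -3*(2*b3 - c)]

/-- The 10×12 recursion matrix `R2` (with `γj = 2 βj − c`). -/
noncomputable def R2g (b1 b2 b3 c : ℝ) : Matrix (Fin 10) (Fin 12) ℝ :=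
  !![2*b1 - c, 2*b2, 0, 0, 0, 0, 0, 0, 0, 0, 0, 2*b3;
     0, 0, 0, 2*b1, 2*b2 - c, 2*b3, 0, 0, 0, 0, 0, 0;
     0, 0, 0, 0, 0, 0, 0, 2*b2, 2*b3 - c, 2*b1, 0, 0;
     0, b1 - b3, 3*b3, b2 - b3, 0, 0, 0, 0, 0, 0, 0, 0;
     0, 0, 0, 0, 0, b2 - b1, 3*b1, b3 - b1, 0, 0, 0, 0;
     0, 0, 0, 0, 0, 0, 0, 0, 0, b3 - b2, 3*b2, b1 - b2;
     0, (b1 - b3)/2, 3*b2/2, 0, 0, 0, 0, 0, 0, 0, 3*b3/2, (b1 - b2)/2;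
     0, 0, 3*b1/2, (b2 - b3)/2, 0, (b2 - b1)/2, 3*b3/2, 0, 0, 0, 0, 0;
     0, 0, 0, 0, 0, 0, 3*b2/2, (b3 - b1)/2, 0, (b3 - b2)/2, 3*b1/2, 0;
     0, 0, -(2*b3 - c), 0, 0, 0, -(2*b1 - c), 0, 0, 0, -(2*b2 - c), 0]

/-- The 12×16 recursion matrix `R3` (with `γj = 2 βj − c`). -/
noncomputable def R3g (b1 b2 b3 c : ℝ) : Matrix (Fin 12) (Fin 16) ℝ :=
  !![2*b1 - c, 2*b2, 0, 0, 0, 0, 0, 0, 0, 0, 0, 2*b3, 0, 0, 0, 0;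
     0, b1 - b3, b2, 0, 0, 0, 0, 0, 0, 0, 0, 0, 2*b3, 0, 0, 0;
     0, 0, (b1 + b2)/3, 0, 0, 0, b3/3, 0, 0, 0, b3/3, 0, 2*b1/3, 2*b2/3, 0, b3/3;
     0, 0, b1, b2 - b3, 0, 0, 0, 0, 0, 0, 0, 0, 0, 2*b3, 0, 0;
     0, 0, 0, 2*b1, 2*b2 - c, 2*b3, 0, 0, 0, 0, 0, 0, 0, 0, 0, 0;
     0, 0, 0, 0, 0, b2 - b1, b3, 0, 0, 0, 0, 0, 0, 2*b1, 0, 0;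
     0, 0, b1/3, 0, 0, 0, (b2 + b3)/3, 0, 0, 0, b1/3, 0, 0, 2*b2/3, 2*b3/3, b1/3;
     0, 0, 0, 0, 0, 0, b2, b3 - b1, 0, 0, 0, 0, 0, 0, 2*b1, 0;
     0, 0, 0, 0, 0, 0, 0, 2*b2, 2*b3 - c, 2*b1, 0, 0, 0, 0, 0, 0;
     0, 0, 0, 0, 0, 0, 0, 0, 0, b3 - b2, b1, 0, 0, 0, 2*b2, 0;
     0, 0, b2/3, 0, 0, 0, b2/3, 0, 0, 0, (b1 + b3)/3, 0, 2*b1/3, 0, 2*b3/3, b2/3;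
     0, 0, 0, 0, 0, 0, 0, 0, 0, 0, b3, b1 - b2, 2*b2, 0, 0, 0]

/-- The recursion matrix `R1(β)`. -/
noncomputable def R1 (b1 b2 b3 : ℝ) : Matrix (Fin 12) (Fin 10) ℝ := R1g b1 b2 b3 1
/-- The recursion matrix `R2(β)`. -/
noncomputable def R2 (b1 b2 b3 : ℝ) : Matrix (Fin 10) (Fin 12) ℝ := R2g b1 b2 b3 1
/-- The recursion matrix `R3(β)`. -/
noncomputable def R3 (b1 b2 b3 : ℝ) : Matrix (Fin 12) (Fin 16) ℝ := R3g b1 b2 b3 1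

/-!
The entries of `R2` and `R3` are affine in `β`, so on the plane `β₁ + β₂ + β₃ = 1` each matrix is
the barycentric combination `∑ βᵢ R(eᵢ)` of its values at the vertices `eᵢ` of the simplex.
Expanding both products bilinearly, `R2(β) R3(β')` and `R2(β') R3(β)` are then
`∑ βᵢ β'ⱼ R2(eᵢ) R3(eⱼ)` and `∑ βᵢ β'ⱼ R2(eⱼ) R3(eᵢ)`, so the identity reduces to the numerical
identities `R2(eᵢ) R3(eⱼ) = R2(eⱼ) R3(eᵢ)` between the vertex values.
-/

theorem Matrix.sum_smul_mul_sum_smul_comm {ι R m n p : Type*} [Fintype ι] [Fintype n]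
    [CommSemiring R] (A : ι → Matrix m n R) (B : ι → Matrix n p R)
    (hAB : ∀ i j, A i * B j = A j * B i) (x y : ι → R) :
    (∑ i, x i • A i) * (∑ j, y j • B j) = (∑ i, y i • A i) * (∑ j, x j • B j) := by
  simp only [Matrix.sum_mul, Matrix.mul_sum, Matrix.smul_mul, Matrix.mul_smul, Finset.smul_sum,
    smul_smul]
  rw [Finset.sum_comm]
  refine Finset.sum_congr rfl fun i _ => Finset.sum_congr rfl fun j _ => ?_
  rw [hAB, mul_comm]

theorem R2_barycentric {b1 b2 b3 : ℝ} (hb : b1 + b2 + b3 = 1) :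
    R2 b1 b2 b3 = b1 • R2 1 0 0 + b2 • R2 0 1 0 + b3 • R2 0 0 1 := by
  conv_lhs => rw [R2, ← hb]
  simp only [R2, R2g, Matrix.smul_of, Matrix.of_add_of, Matrix.smul_cons, Matrix.smul_empty,
    Matrix.cons_add_cons, Matrix.empty_add_empty, smul_eq_mul, EmbeddingLike.apply_eq_iff_eq,
    Matrix.vecCons_inj, and_true]
  repeat' apply And.intro
  all_goals ring

theorem R3_barycentric {b1 b2 b3 : ℝ} (hb : b1 + b2 + b3 = 1) :
    R3 b1 b2 b3 = b1 • R3 1 0 0 + b2 • R3 0 1 0 + b3 • R3 0 0 1 := by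
  conv_lhs => rw [R3, ← hb]
  simp only [R3, R3g, Matrix.smul_of, Matrix.of_add_of, Matrix.smul_cons, Matrix.smul_empty,
    Matrix.cons_add_cons, Matrix.empty_add_empty, smul_eq_mul, EmbeddingLike.apply_eq_iff_eq,
    Matrix.vecCons_inj, and_true]
  repeat' apply And.intro
  all_goals ring

theorem R2_vertex_mul_R3_vertex_comm (i j : Fin 3) :
    ![R2 1 0 0, R2 0 1 0, R2 0 0 1] i * ![R3 1 0 0, R3 0 1 0, R3 0 0 1] j =
      ![R2 1 0 0, R2 0 1 0, R2 0 0 1] j * ![R3 1 0 0, R3 0 1 0, R3 0 0 1] i := by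
  fin_cases i <;> fin_cases j <;> norm_num [R2, R2g, R3, R3g]

theorem R2_R3_commute (b1 b2 b3 b1' b2' b3' : ℝ)
    (hb : b1 + b2 + b3 = 1) (hb' : b1' + b2' + b3' = 1) :
    R2 b1 b2 b3 * R3 b1' b2' b3' = R2 b1' b2' b3' * R3 b1 b2 b3 := by
  have h := Matrix.sum_smul_mul_sum_smul_comm _ _ R2_vertex_mul_R3_vertex_comm
    ![b1, b2, b3] ![b1', b2', b3']
  simp only [Fin.sum_univ_three, Matrix.cons_val_zero, Matrix.cons_val_one, Matrix.cons_val_two,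
    Matrix.head_cons, Matrix.tail_cons] at h
  rwa [R2_barycentric hb, R3_barycentric hb, R2_barycentric hb', R3_barycentric hb']
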